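/- Let n ∈ ℕ, m > 0, λ ∈ [1/3,1], K > 0 with K ≥ √(b_λ Rⁿ), and let B₀ ∈ (0,1) satisfy K√B₀ < Rⁿ, B₀ ≤ K²/(4(a_λ + b_λ)²), and B₀ < 2λn A_T/(e^d μ), where μ := mn/(ω_n Rⁿ). If for some T > 0 the function B ∈ C¹([0,T)) is positive and nonincreasing with B(0) ≤ B₀, then A(t)φ(ξ) − (μ/n)B(t)ξ > 0 for all t ∈ (0,T) and all s ∈ (0,B(t)), where ξ := s/B(t). -/

import Mathlib

open Real Set

/-- `a_λ := (1-λ)²/(2λ)`. -/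
noncomputable def aL (l : ℝ) : ℝ := (1 - l) ^ 2 / (2 * l)

/-- `b_λ := (3λ-1)/(2λ)`. -/
noncomputable def bL (l : ℝ) : ℝ := (3 * l - 1) / (2 * l)

/-- `ω_n`, the `(n-1)`-dimensional measure of the unit sphere in `ℝⁿ`,
equals `n` times the volume of the unit ball. -/
noncomputable def omegaN (n : ℕ) : ℝ :=
  (n : ℝ) * (MeasureTheory.volume (Metric.ball (0 : EuclideanSpace ℝ (Fin n)) 1)).toReal

/-- The comparison profile `φ`. -/
noncomputable def phi (l d ξ : ℝ) : ℝ :=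
  if ξ < 1 then (2 * l / (d * Real.exp d)) * (Real.exp (d * ξ) - 1)
  else 1 - aL l / (ξ - bL l)

/-- The derivative `φ'`. -/
noncomputable def phiD (l d ξ : ℝ) : ℝ :=
  if ξ < 1 then 2 * l * Real.exp (d * (ξ - 1)) else aL l / (ξ - bL l) ^ 2

/-- The second derivative `φ''`. -/
noncomputable def phiDD (l d ξ : ℝ) : ℝ :=
  if ξ < 1 then 2 * d * l * Real.exp (d * (ξ - 1)) else -2 * aL l / (ξ - bL l) ^ 3

/-- `N(t)`. -/
noncomputable def Nf (l R K : ℝ) (n : ℕ) (B : ℝ → ℝ) (t : ℝ) : ℝ :=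
  K ^ 2 + aL l * R ^ n - (aL l + bL l) * (2 * K * Real.sqrt (B t) - bL l * B t)

/-- `A(t)`. -/
noncomputable def Af (m ωn l R K : ℝ) (n : ℕ) (B : ℝ → ℝ) (t : ℝ) : ℝ :=
  (m / ωn) * (K ^ 2 - 2 * bL l * K * Real.sqrt (B t) + (bL l) ^ 2 * B t) / Nf l R K n B t

/-- `D(t)`. -/
noncomputable def Df (m ωn l R K : ℝ) (n : ℕ) (B : ℝ → ℝ) (t : ℝ) : ℝ :=
  (m / ωn) * aL l / Nf l R K n B t

/-- `E(t) := m/ω_n - Rⁿ D(t)`. -/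
noncomputable def Ef (m ωn l R K : ℝ) (n : ℕ) (B : ℝ → ℝ) (t : ℝ) : ℝ :=
  m / ωn - R ^ n * Df m ωn l R K n B t

/-- `A_T := (m/ω_n)·1/(1 + a_λ Rⁿ/K²)`. -/
noncomputable def AT (m ωn l R K : ℝ) (n : ℕ) : ℝ :=
  (m / ωn) * (1 / (1 + aL l * R ^ n / K ^ 2))

/-- The parabolic operator `𝒫`. -/
noncomputable def Pop (n : ℕ) (χ p q μ : ℝ) (w : ℝ → ℝ → ℝ) (s t : ℝ) : ℝ :=
  deriv (fun τ => w s τ) t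
    - (n : ℝ) ^ (p + 1) * (s ^ (2 - 2 / (n : ℝ)) * (deriv (fun σ => w σ t) s) ^ p
        * deriv (deriv (fun σ => w σ t)) s)
      / Real.sqrt ((deriv (fun σ => w σ t) s) ^ 2
        + (n : ℝ) ^ 2 * s ^ (2 - 2 / (n : ℝ)) * (deriv (deriv (fun σ => w σ t)) s) ^ 2)
    - (n : ℝ) ^ q * χ * ((w s t - (μ / (n : ℝ)) * s) * (deriv (fun σ => w σ t) s) ^ q)
      / Real.sqrt (1 + s ^ (2 / (n : ℝ) - 2) * (w s t - (μ / (n : ℝ)) * s) ^ 2)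

/-- `J₁(s,t)`. -/
noncomputable def J1 (n : ℕ) (p m ωn l R K d : ℝ) (B : ℝ → ℝ) (s t : ℝ) : ℝ :=
  -(n : ℝ) ^ (p + 1) * ((s / B t) ^ (2 - 2 / (n : ℝ)) * phiDD l d (s / B t))
    / Real.sqrt ((B t) ^ (4 / (n : ℝ) - 2) * (phiD l d (s / B t)) ^ 2
        + (n : ℝ) ^ 2 * (B t) ^ (2 / (n : ℝ) - 2) * (s / B t) ^ (2 - 2 / (n : ℝ))
          * (phiDD l d (s / B t)) ^ 2)
    * (Af m ωn l R K n B t * phiD l d (s / B t) / B t) ^ (p - 1)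

/-- `J₂(s,t)`. -/
noncomputable def J2 (n : ℕ) (q χ m ωn l R K d μ : ℝ) (B : ℝ → ℝ) (s t : ℝ) : ℝ :=
  -(n : ℝ) ^ q * χ
      * (Af m ωn l R K n B t * phi l d (s / B t) - (μ / (n : ℝ)) * B t * (s / B t))
    / Real.sqrt (1 + (B t) ^ (2 / (n : ℝ) - 2) * (s / B t) ^ (2 / (n : ℝ) - 2)
        * (Af m ωn l R K n B t * phi l d (s / B t) - (μ / (n : ℝ)) * B t * (s / B t)) ^ 2)
    * (Af m ωn l R K n B t * phiD l d (s / B t) / B t) ^ (q - 1)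

/-!
Since `B` is nonincreasing, `B(t) ≤ B₀ ≤ K²/(4(a_λ+b_λ)²)`, i.e. `2(a_λ+b_λ)√B(t) ≤ K`. This keeps
`N(t)` positive and gives `A(t) ≥ A_T`, because with `u = √B(t)`
`(K - b_λu)²(K² + a_λRⁿ) - K²N(t) = a_λ u (2K - b_λu)(K² - b_λRⁿ) ≥ 0`.
On `(0,1)` the inequality `eˣ ≥ 1 + x` gives `φ(ξ) ≥ 2λξ/e^d`, and the smallness of `B₀` gives
`(μ/n)B(t) < 2λA_T/e^d`; multiplying by `ξ` and chaining the three bounds proves the claim.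
-/

lemma aL_nonneg {l : ℝ} (hl : 0 ≤ l) : 0 ≤ aL l :=
  div_nonneg (sq_nonneg _) (by linarith)

lemma bL_nonneg {l : ℝ} (hl : 1 / 3 ≤ l) : 0 ≤ bL l :=
  div_nonneg (by linarith) (by linarith)

lemma aL_add_bL_pos {l : ℝ} (hl : 0 < l) : 0 < aL l + bL l := by
  rw [aL, bL, ← add_div]
  exact div_pos (by nlinarith) (by linarith)

lemma omegaN_pos {n : ℕ} (hn : 0 < n) : 0 < omegaN n :=
  mul_pos (Nat.cast_pos.2 hn) <| ENNReal.toReal_pos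
    (Metric.measure_ball_pos _ _ one_pos).ne' MeasureTheory.measure_ball_lt_top.ne

lemma two_mul_sqrt_le_of_le_div {c x K : ℝ} (hc : 0 < c) (hK : 0 < K)
    (hx : x ≤ K ^ 2 / (4 * c ^ 2)) : 2 * c * √x ≤ K := by
  have : √x ≤ K / (2 * c) := (Real.sqrt_le_left (by positivity)).2 (by rwa [div_pow, mul_pow,
    show (2 : ℝ) ^ 2 = 4 by norm_num])
  rwa [le_div_iff₀ (by positivity), mul_comm] at this

lemma sq_add_mul_sub_mul_pos {a b K Rn u : ℝ} (ha : 0 ≤ a) (hb : 0 ≤ b) (hab : 0 < a + b)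
    (hRn : 0 < Rn) (hu : 0 < u) (huK : 2 * (a + b) * u ≤ K) :
    0 < K ^ 2 + a * Rn - (a + b) * (2 * K * u - b * u ^ 2) := by
  have hK : 2 * (a + b) * u * K ≤ K ^ 2 := by
    nlinarith [mul_le_mul_of_nonneg_right huK (le_trans (by positivity) huK)]
  have hpos : 0 < a * Rn + (a + b) * b * u ^ 2 := by
    rcases hb.lt_or_eq with hb | rfl
    · nlinarith [mul_nonneg ha hRn.le, mul_pos (mul_pos hab hb) (pow_pos hu 2)]
    · simpa using mul_pos (by simpa using hab) hRn
  linarith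

lemma Nf_pos {l R K : ℝ} {n : ℕ} {B : ℝ → ℝ} {t : ℝ} (hl : 1 / 3 ≤ l) (hK : 0 < K)
    (hRn : 0 < R ^ n) (hB : 0 < B t) (hBK : B t ≤ K ^ 2 / (4 * (aL l + bL l) ^ 2)) :
    0 < Nf l R K n B t := by
  have hab := aL_add_bL_pos (by linarith : 0 < l)
  rw [Nf, ← Real.sq_sqrt hB.le, Real.sqrt_sq (Real.sqrt_nonneg _)]
  exact sq_add_mul_sub_mul_pos (aL_nonneg (by linarith)) (bL_nonneg hl) hab hRn
    (Real.sqrt_pos.2 hB) (two_mul_sqrt_le_of_le_div hab hK hBK)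

lemma AT_eq (m ωn l R K : ℝ) (n : ℕ) (hK : 0 < K) :
    AT m ωn l R K n = m / ωn * K ^ 2 / (K ^ 2 + aL l * R ^ n) := by
  rw [AT]
  field_simp

lemma sq_mul_sub_mul_le {a b K Rn u : ℝ} (ha : 0 ≤ a) (hu : 0 ≤ u) (hbu : b * u ≤ 2 * K)
    (hKb : b * Rn ≤ K ^ 2) :
    K ^ 2 * (K ^ 2 + a * Rn - (a + b) * (2 * K * u - b * u ^ 2))
      ≤ (K - b * u) ^ 2 * (K ^ 2 + a * Rn) := by
  have hid : (K - b * u) ^ 2 * (K ^ 2 + a * Rn)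
      - K ^ 2 * (K ^ 2 + a * Rn - (a + b) * (2 * K * u - b * u ^ 2))
      = a * u * (2 * K - b * u) * (K ^ 2 - b * Rn) := by ring
  have : 0 ≤ a * u * (2 * K - b * u) * (K ^ 2 - b * Rn) := by
    have : 0 ≤ 2 * K - b * u := by linarith
    have : 0 ≤ K ^ 2 - b * Rn := by linarith
    positivity
  linarith

lemma AT_le_Af {m ωn l R K : ℝ} {n : ℕ} {B : ℝ → ℝ} {t : ℝ} (hmω : 0 ≤ m / ωn)
    (hl : 1 / 3 ≤ l) (hK : 0 < K) (hKb : bL l * R ^ n ≤ K ^ 2) (hRn : 0 < R ^ n)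
    (hB : 0 < B t) (hBK : B t ≤ K ^ 2 / (4 * (aL l + bL l) ^ 2)) :
    AT m ωn l R K n ≤ Af m ωn l R K n B t := by
  have hN := Nf_pos hl hK hRn hB hBK
  have ha := aL_nonneg (by linarith : 0 ≤ l)
  have hbu : bL l * √(B t) ≤ 2 * K := by
    nlinarith [two_mul_sqrt_le_of_le_div (aL_add_bL_pos (by linarith : 0 < l)) hK hBK,
      Real.sqrt_nonneg (B t)]
  have key := sq_mul_sub_mul_le ha (Real.sqrt_nonneg _) hbu hKb
  rw [AT_eq m ωn l R K n hK, Af, div_le_div_iff₀ (by positivity) hN, Nf,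
    ← Real.sq_sqrt hB.le, Real.sqrt_sq (Real.sqrt_nonneg _),
    show ∀ x : ℝ, K ^ 2 - 2 * bL l * K * x + bL l ^ 2 * x ^ 2 = (K - bL l * x) ^ 2 by
      intro x; ring]
  linarith [mul_le_mul_of_nonneg_left key hmω]

lemma mul_le_phi {l d ξ : ℝ} (hl : 0 ≤ l) (hd : 0 < d) (hξ : ξ < 1) :
    2 * l / exp d * ξ ≤ phi l d ξ := by
  rw [phi, if_pos hξ, show 2 * l / exp d * ξ = 2 * l / (d * exp d) * (d * ξ) by field_simp]
  gcongr
  linarith [add_one_le_exp (d * ξ)]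

lemma AT_pos {m ωn l R K : ℝ} {n : ℕ} (hmω : 0 < m / ωn) (hl : 0 ≤ l) (hK : 0 < K)
    (hRn : 0 < R ^ n) : 0 < AT m ωn l R K n := by
  have := aL_nonneg hl
  rw [AT_eq m ωn l R K n hK]
  positivity

lemma div_mul_lt_of_le_of_lt_div {μ N A e c x B0 : ℝ} (hμ : 0 < μ) (hN : 0 < N) (he : 0 < e)
    (hx : x ≤ B0) (hB0 : B0 < c * N * A / (e * μ)) : μ / N * x < A * (c / e) := by
  rw [lt_div_iff₀ (by positivity)] at hB0
  calc μ / N * x ≤ μ / N * B0 := by gcongr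
    _ = B0 * (e * μ) / (N * e) := by field_simp
    _ < c * N * A / (N * e) := by gcongr
    _ = A * (c / e) := by field_simp

theorem stmt10_general (n : ℕ) (hn : 0 < n) (R m l K T d B0 : ℝ) (hR : 0 < R) (hm : 0 < m)
    (hl : l ∈ Set.Icc (1/3 : ℝ) 1) (hK : 0 < K) (hKb : Real.sqrt (bL l * R ^ n) ≤ K)
    (hd : d ∈ Set.Ioo (1 : ℝ) 2)
    (hB0le : B0 ≤ K ^ 2 / (4 * (aL l + bL l) ^ 2))
    (hB0small : B0 < 2 * l * (n : ℝ) * AT m (omegaN n) l R K n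
        / (Real.exp d * ((m * n) / (omegaN n * R ^ n))))
    (B : ℝ → ℝ)
    (hBpos : ∀ t ∈ Set.Ico (0 : ℝ) T, 0 < B t)
    (hBanti : AntitoneOn B (Set.Ico 0 T))
    (hBinit : B 0 ≤ B0) :
    ∀ t ∈ Set.Ioo (0 : ℝ) T, ∀ s ∈ Set.Ioo (0 : ℝ) (B t),
      0 < Af m (omegaN n) l R K n B t * phi l d (s / B t)
          - (((m * n) / (omegaN n * R ^ n)) / (n : ℝ)) * B t * (s / B t) := by
  intro t ht s hs
  have hRn : 0 < R ^ n := pow_pos hR n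
  have hmω : 0 < m / omegaN n := div_pos hm (omegaN_pos hn)
  have hl0 : 0 ≤ l := by linarith [hl.1]
  have hBt : 0 < B t := hBpos t (Ioo_subset_Ico_self ht)
  have hBB0 : B t ≤ B0 :=
    (hBanti ⟨le_rfl, ht.1.trans ht.2⟩ (Ioo_subset_Ico_self ht) ht.1.le).trans hBinit
  have hAT := AT_le_Af hmω.le hl.1 hK (Real.sqrt_le_iff.1 hKb).2 hRn hBt (hBB0.trans hB0le)
  have hATpos := AT_pos (n := n) (R := R) hmω hl0 hK hRn
  have hξ : 0 < s / B t := div_pos hs.1 hBt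
  have hφ := mul_le_phi (d := d) hl0 (by linarith [hd.1]) ((div_lt_one hBt).2 hs.2)
  have hsmall := div_mul_lt_of_le_of_lt_div (by have := omegaN_pos hn; positivity)
    (Nat.cast_pos.2 hn) (exp_pos d) hBB0 hB0small
  rw [sub_pos]
  calc m * n / (omegaN n * R ^ n) / n * B t * (s / B t)
      < AT m (omegaN n) l R K n * (2 * l / exp d) * (s / B t) := by gcongr
    _ ≤ AT m (omegaN n) l R K n * phi l d (s / B t) := by
      rw [mul_assoc]
      exact mul_le_mul_of_nonneg_left hφ hATpos.le
    _ ≤ Af m (omegaN n) l R K n B t * phi l d (s / B t) := by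
      gcongr
      exact (by positivity : (0 : ℝ) ≤ 2 * l / exp d * (s / B t)).trans hφ

/-- Very inner region positivity:
`A(t)φ(ξ) − (μ/n)B(t)ξ > 0` for `t ∈ (0,T)` and `s ∈ (0,B(t))`, `ξ = s/B(t)`. -/
theorem stmt10 (n : ℕ) (hn : 0 < n) (R m l K T d B0 : ℝ) (hR : 0 < R) (hm : 0 < m)
    (hl : l ∈ Set.Icc (1/3 : ℝ) 1) (hK : 0 < K) (hKb : Real.sqrt (bL l * R ^ n) ≤ K)
    (hT : 0 < T)
    (hd : d ∈ Set.Ioo (1 : ℝ) 2) (hde : (2 - d) * Real.exp d - 2 = 0)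
    (hB0 : B0 ∈ Set.Ioo (0 : ℝ) 1) (hB0R : K * Real.sqrt B0 < R ^ n)
    (hB0le : B0 ≤ K ^ 2 / (4 * (aL l + bL l) ^ 2))
    (hB0small : B0 < 2 * l * (n : ℝ) * AT m (omegaN n) l R K n
        / (Real.exp d * ((m * n) / (omegaN n * R ^ n))))
    (B B' : ℝ → ℝ)
    (hB : ∀ t ∈ Set.Ico (0 : ℝ) T, HasDerivAt B (B' t) t)
    (hB'c : ContinuousOn B' (Set.Ico 0 T))
    (hBpos : ∀ t ∈ Set.Ico (0 : ℝ) T, 0 < B t)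
    (hBanti : AntitoneOn B (Set.Ico 0 T))
    (hBinit : B 0 ≤ B0) :
    ∀ t ∈ Set.Ioo (0 : ℝ) T, ∀ s ∈ Set.Ioo (0 : ℝ) (B t),
      0 < Af m (omegaN n) l R K n B t * phi l d (s / B t)
          - (((m * n) / (omegaN n * R ^ n)) / (n : ℝ)) * B t * (s / B t) :=
  stmt10_general n hn R m l K T d B0 hR hm hl hK hKb hd hB0le hB0small B hBpos hBanti hBinit
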